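/- A partition λ admits at least one (m,n)-hook semistandard tableau of shape λ if and only if λ is an (m,n)-hook partition, i.e. λ_{m+1} ≤ n. -/
import Mathlib


/-- The ordered alphabet `B_{m|n}`: `Sum.inl k` is the barred letter `\overline{m-k}`
(degree 0), `Sum.inr k` is the unbarred letter `k+1` (degree 1).  The linear order
`\overline m < ⋯ < \overline 1 < 1 < ⋯ < n` is realized by `ordB`. -/
def ordB {m n : ℕ} : Fin m ⊕ Fin n → ℕ := Sum.elim (fun i => (i : ℕ)) (fun j => m + (j : ℕ))

/-- An `(m,n)`-hook semistandard tableau of shape `lam` (a filling of the Young diagram of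
`lam` with entries in `B_{m|n}`): rows and columns are weakly increasing, degree-0 (barred)
entries are strictly increasing down columns (i.e. repeats in a column are unbarred),
and degree-1 (unbarred) entries are strictly increasing along rows (i.e. repeats in a row
are barred). -/
structure HookSSYT (m n : ℕ) (lam : ℕ → ℕ) where
  entry : ∀ i j : ℕ, j < lam i → Fin m ⊕ Fin n
  row_le : ∀ i j (h : j + 1 < lam i) (h' : j < lam i),
    ordB (entry i j h') ≤ ordB (entry i (j + 1) h)
  row_strict : ∀ i j (h : j + 1 < lam i) (h' : j < lam i),
    entry i j h' = entry i (j + 1) h → (entry i j h').isLeft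
  col_le : ∀ i j (h : j < lam (i + 1)) (h' : j < lam i),
    ordB (entry i j h') ≤ ordB (entry (i + 1) j h)
  col_strict : ∀ i j (h : j < lam (i + 1)) (h' : j < lam i),
    entry i j h' = entry (i + 1) j h → (entry i j h').isRight

/-- A partition `lam` admits at least one `(m,n)`-hook semistandard tableau of shape `lam`
if and only if `lam` is an `(m,n)`-hook partition, i.e. `λ_{m+1} ≤ n`
(here `lam` is 0-indexed, so `λ_{m+1} = lam m`). -/
theorem stmt_1 (m n : ℕ) (lam : ℕ → ℕ)
    (hdec : ∀ i, lam (i + 1) ≤ lam i) (hfin : ∃ N, ∀ i ≥ N, lam i = 0) :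
    Nonempty (HookSSYT m n lam) ↔ lam m ≤ n := by
  have anti : ∀ i k : ℕ, i ≤ k → lam k ≤ lam i := by
    intro i k hik
    induction k with
    | zero => have : i = 0 := Nat.le_zero.mp hik; simp [this]
    | succ k ih =>
      rcases Nat.lt_or_ge i (k + 1) with h | h
      · exact (hdec k).trans (ih (Nat.lt_succ_iff.mp h))
      · have : i = k + 1 := le_antisymm hik h
        simp [this]
  constructor
  · rintro ⟨T⟩
    have claimA : ∀ i j (h : j < lam i) a, T.entry i j h = Sum.inl a → i ≤ (a : ℕ) := by
      intro i
      induction i with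
      | zero => intro j h a _; exact Nat.zero_le _
      | succ i ih =>
        intro j h a ha
        have h' : j < lam i := lt_of_lt_of_le h (hdec i)
        have hle := T.col_le i j h h'
        have hst := T.col_strict i j h h'
        rcases he : T.entry i j h' with b | c
        · rw [he, ha] at hle
          simp only [ordB, Sum.elim_inl] at hle
          rcases lt_or_eq_of_le hle with hlt | heq
          · exact Nat.succ_le_of_lt (lt_of_le_of_lt (ih j h' b he) hlt)
          · exfalso
            have heq2 : T.entry i j h' = T.entry (i + 1) j h := by
              rw [he, ha]; congr 1; exact Fin.ext heq
            have := hst heq2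
            rw [he] at this; simp at this
        · exfalso
          rw [he, ha] at hle
          simp only [ordB, Sum.elim_inr, Sum.elim_inl] at hle
          have := a.isLt
          omega
    have claimC : ∀ j (h : j < lam m) b, T.entry m j h = Sum.inr b → j ≤ (b : ℕ) := by
      intro j
      induction j with
      | zero => intro h b _; exact Nat.zero_le _
      | succ j ih =>
        intro h b hb
        have h' : j < lam m := Nat.lt_of_succ_lt h
        have hle := T.row_le m j h h'
        have hst := T.row_strict m j h h'
        rcases he : T.entry m j h' with a | c
        · exact absurd (claimA m j h' a he) (by have := a.isLt; omega)
        · rw [he, hb] at hle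
          simp only [ordB, Sum.elim_inr] at hle
          rcases lt_or_eq_of_le (by omega : (c : ℕ) ≤ (b : ℕ)) with hlt | heq
          · exact Nat.succ_le_of_lt (lt_of_le_of_lt (ih h' c he) hlt)
          · exfalso
            have heq2 : T.entry m j h' = T.entry m (j + 1) h := by
              rw [he, hb]; congr 1; exact Fin.ext heq
            have := hst heq2
            rw [he] at this; simp at this
    by_contra hn
    push_neg at hn
    have h : n < lam m := hn
    rcases he : T.entry m n h with a | b
    · exact absurd (claimA m n h a he) (by have := a.isLt; omega)
    · exact absurd (claimC n h b he) (by have := b.isLt; omega)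
  · intro hmn
    refine ⟨⟨fun i j h =>
      if hi : i < m then Sum.inl ⟨i, hi⟩
      else Sum.inr ⟨j, lt_of_lt_of_le h (le_trans (anti m i (le_of_not_gt hi)) hmn)⟩,
      ?_, ?_, ?_, ?_⟩⟩
    · intro i j h h'
      by_cases hi : i < m <;> simp [hi, ordB]
    · intro i j h h' heq
      by_cases hi : i < m
      · simp [hi]
      · simp [hi] at heq
    · intro i j h h'
      by_cases hi : i < m <;> by_cases hi1 : i + 1 < m <;>
        simp [hi, hi1, ordB] <;> omega
    · intro i j h h' heq
      by_cases hi : i < m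
      · by_cases hi1 : i + 1 < m
        · simp [hi, hi1] at heq
        · simp [hi, hi1] at heq
      · have hi1 : ¬ i + 1 < m := by omega
        simp [hi, hi1]
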